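/- For every x ∈ ∂A_g there exists a vector v ∈ ℝ^{(d+1)n} with |v|² < 4 n³ r_+² such that v·n_{i+} = r_- /2 for every i with x̆_i = r_+, v·n_{i−} = r_- /2 for every i with x̆_i = r_-, and v·n_{ij}(x) ≥ r_- /2 for every pair i ≠ j with |x_i − x_j| = x̆_i + x̆_j. (Such a v is obtained by taking v_i = x_i − x'_i, where x'_i is the center of gravity of the cluster of globules connected to globule i by a chain of collisions, and v̆_i = (r_- /(r_+ − r_-))((r_+ + r_-)/2 − x̆_i).) -/

import Mathlib

open scoped RealInnerProductSpace

noncomputable section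

variable {H : Type*} [NormedAddCommGroup H] [InnerProductSpace ℝ H]

/-- The set `N^D_{x,α}` of inward unit normal vectors to `D` at `x` with constant `α`. -/
def normalSet (D : Set H) (x : H) (α : ℝ) : Set H :=
  {v | ‖v‖ = 1 ∧ Metric.ball (x - α • v) α ∩ D = ∅}

/-- The set `N^D_x = ⋃_{α>0} N^D_{x,α}` of inward unit normal vectors to `D` at `x`. -/
def normalCone (D : Set H) (x : H) : Set H :=
  ⋃ α ∈ Set.Ioi (0 : ℝ), normalSet D x α

/-- `D` satisfies the Uniform Exterior Sphere property with constant `α`. -/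
def UES (D : Set H) (α : ℝ) : Prop :=
  ∀ x ∈ frontier D, normalCone D x = normalSet D x α ∧ (normalSet D x α).Nonempty

/-- `D` satisfies the Uniform Normal Cone property with constants `β`, `δ`. -/
def UNC (D : Set H) (β δ : ℝ) : Prop :=
  ∀ x ∈ frontier D, ∃ l : H, ‖l‖ = 1 ∧
    ∀ y ∈ frontier D, ‖y - x‖ ≤ δ → ∀ v ∈ normalCone D y, ⟪v, l⟫ ≥ Real.sqrt (1 - β ^ 2)

/-- The configuration space `ℝ^{(d+1)n}` of `n` globules in `ℝ^d`: each globule is a pair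
(center, radius), and the whole space carries the Euclidean (`L²`) norm. -/
abbrev GConf (d n : ℕ) : Type :=
  PiLp 2 (fun _ : Fin n => WithLp 2 (EuclideanSpace ℝ (Fin d) × ℝ))

variable {d n : ℕ}

/-- Center of the `i`-th globule. -/
def gC (x : GConf d n) (i : Fin n) : EuclideanSpace ℝ (Fin d) := (x i).fst

/-- Radius of the `i`-th globule. -/
def gR (x : GConf d n) (i : Fin n) : ℝ := (x i).snd

/-- Build a configuration from a family of (center, radius) pairs. -/
def mkG (f : Fin n → EuclideanSpace ℝ (Fin d) × ℝ) : GConf d n :=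
  (WithLp.equiv 2 _).symm fun i => (WithLp.equiv 2 _).symm (f i)

/-- The set `A_g` of allowed globule configurations: all radii lie in `[r₋, r₊]` and the
globules are pairwise non-intersecting. -/
def Ag (d n : ℕ) (rm rp : ℝ) : Set (GConf d n) :=
  {x | (∀ i, rm ≤ gR x i ∧ gR x i ≤ rp) ∧
    ∀ i j, i ≠ j → ‖gC x i - gC x j‖ ≥ gR x i + gR x j}

/-- The unit normal vector `n_{ij}(x)` to the collision constraint `|x_i−x_j| ≥ x̆_i+x̆_j`,
at a configuration `x` with `|x_i−x_j| = x̆_i+x̆_j > 0`. -/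
def nij (x : GConf d n) (i j : Fin n) : GConf d n :=
  mkG fun k =>
    if k = i then ((2 * (gR x i + gR x j))⁻¹ • (gC x i - gC x j), -(1 / 2 : ℝ))
    else if k = j then ((2 * (gR x i + gR x j))⁻¹ • (gC x j - gC x i), -(1 / 2 : ℝ))
    else 0

/-- The unit normal vector `n_{i+}` to the constraint `x̆_i ≤ r₊`: its only nonzero component
is the radius component of globule `i`, equal to `−1`. -/
def nplus (d n : ℕ) (i : Fin n) : GConf d n :=
  mkG fun k => if k = i then (0, (-1 : ℝ)) else 0

/-- The unit normal vector `n_{i−}` to the constraint `x̆_i ≥ r₋`: its only nonzero component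
is the radius component of globule `i`, equal to `1`. -/
def nminus (d n : ℕ) (i : Fin n) : GConf d n :=
  mkG fun k => if k = i then (0, (1 : ℝ)) else 0

end

/-!
Take for `v` the displacement of each centre from a fixed globule of its collision cluster (the
connected component of the graph of touching pairs), and move each radius by the affine map
`r₋ ↦ r₋/2`, `r₊ ↦ -r₋/2`. Touching globules lie in the same cluster, so `v_i - v_j = x_i - x_j`
and the centre part of `⟪v, n_ij⟫` equals `(x̆_i + x̆_j)/2 ≥ r₋`, while the radius part is at least
`-r₋/2`. The size bound holds because a cluster is joined by a path of at most `n - 1`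
collisions, each moving the centre by at most `2 r₊`.
-/

namespace SimpleGraph

variable {V E : Type*} {G : SimpleGraph V} [SeminormedAddGroup E] {f : V → E} {D : ℝ}

lemma Walk.norm_sub_le_mul_length (hD : ∀ u v, G.Adj u v → ‖f u - f v‖ ≤ D) {a b : V} :
    ∀ p : G.Walk a b, ‖f a - f b‖ ≤ D * p.length
  | .nil => by simp
  | .cons h p => by
    calc ‖f a - f b‖ ≤ ‖f a - f _‖ + ‖f _ - f b‖ := norm_sub_le_norm_sub_add_norm_sub _ _ _
      _ ≤ D + D * p.length := add_le_add (hD _ _ h) (p.norm_sub_le_mul_length hD)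
      _ = D * (p.cons h).length := by rw [Walk.length_cons]; push_cast; ring

lemma Reachable.norm_sub_le_mul_card_sub_one [Fintype V] (hD₀ : 0 ≤ D)
    (hD : ∀ u v, G.Adj u v → ‖f u - f v‖ ≤ D) {a b : V} (h : G.Reachable a b) :
    ‖f a - f b‖ ≤ D * (Fintype.card V - 1) := by
  obtain ⟨p, hp, -⟩ := h.exists_path_of_dist
  have hlen : (p.length : ℝ) ≤ Fintype.card V - 1 := by
    have := hp.length_lt
    rw [le_sub_iff_add_le]
    exact_mod_cast this
  exact (p.norm_sub_le_mul_length hD).trans (mul_le_mul_of_nonneg_left hlen hD₀)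

end SimpleGraph

noncomputable section

variable {d n : ℕ}

@[simp] lemma gC_mkG (f : Fin n → EuclideanSpace ℝ (Fin d) × ℝ) (k : Fin n) :
    gC (mkG f) k = (f k).1 := rfl

@[simp] lemma gR_mkG (f : Fin n → EuclideanSpace ℝ (Fin d) × ℝ) (k : Fin n) :
    gR (mkG f) k = (f k).2 := rfl

lemma inner_eq_sum_gC_gR (w u : GConf d n) :
    ⟪w, u⟫ = ∑ k, (⟪gC w k, gC u k⟫ + gR w k * gR u k) := by
  rw [PiLp.inner_apply]
  refine Finset.sum_congr rfl fun k _ => ?_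
  rw [WithLp.prod_inner_apply]
  simp [RCLike.inner_apply, gC, gR, mul_comm]

lemma norm_sq_eq_sum_gC_gR (w : GConf d n) :
    ‖w‖ ^ 2 = ∑ k, (‖gC w k‖ ^ 2 + gR w k ^ 2) := by
  simp_rw [← real_inner_self_eq_norm_sq, inner_eq_sum_gC_gR, real_inner_self_eq_norm_sq, sq]

lemma norm_sq_le_of_gC_gR_le (w : GConf d n) {a b : ℝ} (ha : ∀ k, ‖gC w k‖ ≤ a)
    (hb : ∀ k, |gR w k| ≤ b) : ‖w‖ ^ 2 ≤ n * (a ^ 2 + b ^ 2) := by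
  rw [norm_sq_eq_sum_gC_gR]
  calc ∑ k, (‖gC w k‖ ^ 2 + gR w k ^ 2) ≤ ∑ _k : Fin n, (a ^ 2 + b ^ 2) := by
        refine Finset.sum_le_sum fun k _ => add_le_add ?_ ?_
        · exact pow_le_pow_left₀ (norm_nonneg _) (ha k) 2
        · exact sq_le_sq' (abs_le.mp (hb k)).1 (abs_le.mp (hb k)).2
    _ = n * (a ^ 2 + b ^ 2) := by simp [mul_add]

lemma isClosed_Ag (rm rp : ℝ) : IsClosed (Ag d n rm rp) := by
  have hR (i : Fin n) : Continuous fun y : GConf d n => gR y i := by unfold gR; fun_prop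
  have hC (i : Fin n) : Continuous fun y : GConf d n => gC y i := by unfold gC; fun_prop
  simp only [Ag, Set.ofPred_and, Set.ofPred_forall, ge_iff_le]
  refine .inter (isClosed_iInter fun i => .inter ?_ ?_)
    (isClosed_iInter fun i => isClosed_iInter fun j => isClosed_iInter fun _ => ?_)
  · exact isClosed_le continuous_const (hR i)
  · exact isClosed_le (hR i) continuous_const
  · exact isClosed_le ((hR i).add (hR j)) ((hC i).sub (hC j)).norm

lemma inner_nplus (v : GConf d n) (i : Fin n) : ⟪v, nplus d n i⟫ = -gR v i := by
  rw [inner_eq_sum_gC_gR, Finset.sum_eq_single i] <;> simp_all [nplus]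

lemma inner_nminus (v : GConf d n) (i : Fin n) : ⟪v, nminus d n i⟫ = gR v i := by
  rw [inner_eq_sum_gC_gR, Finset.sum_eq_single i] <;> simp_all [nminus]

lemma inner_nij (v x : GConf d n) {i j : Fin n} (hij : i ≠ j) :
    ⟪v, nij x i j⟫ = (2 * (gR x i + gR x j))⁻¹ * ⟪gC v i - gC v j, gC x i - gC x j⟫
      - (gR v i + gR v j) / 2 := by
  rw [inner_eq_sum_gC_gR, ← Finset.sum_subset (Finset.subset_univ {i, j}), Finset.sum_pair hij]
  · simp only [nij, gC_mkG, gR_mkG, hij.symm, if_true, if_false]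
    rw [real_inner_smul_right, real_inner_smul_right, inner_sub_left,
      ← neg_sub (gC x i) (gC x j), inner_neg_right]
    ring
  · intro k _ hk
    simp only [Finset.mem_insert, Finset.mem_singleton, not_or] at hk
    simp [nij, hk.1, hk.2]

def collisionGraph (x : GConf d n) : SimpleGraph (Fin n) where
  Adj i j := i ≠ j ∧ ‖gC x i - gC x j‖ = gR x i + gR x j
  symm := ⟨fun _ _ h => ⟨h.1.symm, by rw [norm_sub_rev, h.2, add_comm]⟩⟩
  loopless := ⟨fun _ h => h.1 rfl⟩

/-- The paper uses the centre of gravity of the cluster of `i`; any point of the cluster will do. -/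
def clusterRep (x : GConf d n) (i : Fin n) : Fin n :=
  ((collisionGraph x).connectedComponentMk i).out

lemma reachable_clusterRep (x : GConf d n) (i : Fin n) :
    (collisionGraph x).Reachable i (clusterRep x i) :=
  (SimpleGraph.ConnectedComponent.exact (Quot.out_eq _)).symm

lemma clusterRep_eq_of_adj {x : GConf d n} {i j : Fin n} (h : (collisionGraph x).Adj i j) :
    clusterRep x i = clusterRep x j := by
  simp only [clusterRep, SimpleGraph.ConnectedComponent.sound h.reachable]

lemma norm_gC_sub_clusterRep_le {rm rp : ℝ} (hrp : 0 ≤ rp) {x : GConf d n}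
    (hx : x ∈ Ag d n rm rp) (i : Fin n) :
    ‖gC x i - gC x (clusterRep x i)‖ ≤ 2 * rp * (n - 1) := by
  have hadj : ∀ j k, (collisionGraph x).Adj j k → ‖gC x j - gC x k‖ ≤ 2 * rp := fun j k h => by
    rw [h.2]; linarith [(hx.1 j).2, (hx.1 k).2]
  simpa using (reachable_clusterRep x i).norm_sub_le_mul_card_sub_one (by positivity) hadj

/-- The paper's `(r₋/(r₊-r₋))((r₊+r₋)/2 - r)`, written as the affine map with `r₋ ↦ r₋/2`
and `r₊ ↦ -r₋/2`. -/
def radiusShift (rm rp r : ℝ) : ℝ := rm / 2 - rm / (rp - rm) * (r - rm)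

lemma radiusShift_rp {rm rp : ℝ} (h : rm ≠ rp) : radiusShift rm rp rp = -(rm / 2) := by
  rw [radiusShift, div_mul_cancel₀ _ (sub_ne_zero.mpr h.symm)]; ring

lemma radiusShift_le {rm rp r : ℝ} (h0 : 0 ≤ rm) (hr : rm < rp) (hrm : rm ≤ r) :
    radiusShift rm rp r ≤ rm / 2 := by
  have : 0 ≤ rm / (rp - rm) * (r - rm) := by
    have := sub_pos.mpr hr
    have := sub_nonneg.mpr hrm
    positivity
  rw [radiusShift]; linarith

lemma abs_radiusShift_le {rm rp r : ℝ} (h0 : 0 ≤ rm) (hr : rm < rp) (hrm : rm ≤ r)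
    (hrp : r ≤ rp) : |radiusShift rm rp r| ≤ rm / 2 := by
  refine abs_le.mpr ⟨?_, radiusShift_le h0 hr hrm⟩
  have hc : rm / (rp - rm) * (r - rm) ≤ rm / (rp - rm) * (rp - rm) := by
    have := sub_pos.mpr hr
    gcongr
  rw [div_mul_cancel₀ _ (sub_pos.mpr hr).ne'] at hc
  rw [radiusShift]; linarith

def escapeVector (x : GConf d n) (rm rp : ℝ) : GConf d n :=
  mkG fun i => (gC x i - gC x (clusterRep x i), radiusShift rm rp (gR x i))

lemma norm_sq_escapeVector_lt (hn : 1 ≤ n) {rm rp : ℝ} (h0 : 0 < rm) (hr : rm < rp)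
    {x : GConf d n} (hx : x ∈ Ag d n rm rp) :
    ‖escapeVector x rm rp‖ ^ 2 < 4 * n ^ 3 * rp ^ 2 := by
  have hn' : (1 : ℝ) ≤ n := by exact_mod_cast hn
  calc ‖escapeVector x rm rp‖ ^ 2 ≤ n * ((2 * rp * (n - 1)) ^ 2 + (rm / 2) ^ 2) :=
        norm_sq_le_of_gC_gR_le _ (fun i => norm_gC_sub_clusterRep_le (by linarith) hx i)
          fun i => abs_radiusShift_le h0.le hr (hx.1 i).1 (hx.1 i).2
    _ < 4 * n ^ 3 * rp ^ 2 := by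
        have hrm : (rm / 2) ^ 2 < 4 * rp ^ 2 * (2 * n - 1) := by nlinarith
        nlinarith [mul_lt_mul_of_pos_left hrm (by linarith : (0 : ℝ) < n)]

lemma inner_escapeVector_nplus {rm rp : ℝ} (hr : rm ≠ rp) {x : GConf d n} {i : Fin n}
    (hi : gR x i = rp) : ⟪escapeVector x rm rp, nplus d n i⟫ = rm / 2 := by
  rw [inner_nplus, escapeVector, gR_mkG, hi, radiusShift_rp hr, neg_neg]

lemma inner_escapeVector_nminus (rm rp : ℝ) {x : GConf d n} {i : Fin n}
    (hi : gR x i = rm) : ⟪escapeVector x rm rp, nminus d n i⟫ = rm / 2 := by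
  simp [inner_nminus, escapeVector, hi, radiusShift]

lemma inner_escapeVector_nij_ge {rm rp : ℝ} (h0 : 0 < rm) (hr : rm < rp) {x : GConf d n}
    (hx : x ∈ Ag d n rm rp) {i j : Fin n} (hij : i ≠ j)
    (hcol : ‖gC x i - gC x j‖ = gR x i + gR x j) :
    rm / 2 ≤ ⟪escapeVector x rm rp, nij x i j⟫ := by
  set s := gR x i + gR x j
  have hs : 2 * rm ≤ s := by linarith [(hx.1 i).1, (hx.1 j).1]
  have hcenter : (gC x i - gC x (clusterRep x i)) - (gC x j - gC x (clusterRep x j))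
      = gC x i - gC x j := by
    rw [clusterRep_eq_of_adj (x := x) ⟨hij, hcol⟩]; abel
  have hnormal : (2 * s)⁻¹ * ⟪gC x i - gC x j, gC x i - gC x j⟫ = s / 2 := by
    rw [real_inner_self_eq_norm_sq, hcol]
    field_simp
  rw [inner_nij _ _ hij, escapeVector, gC_mkG, gC_mkG, gR_mkG, gR_mkG, hcenter, hnormal]
  linarith [radiusShift_le h0.le hr (hx.1 i).1, radiusShift_le h0.le hr (hx.1 j).1]

end

theorem stmt_14_general (d n : ℕ) (hn : 1 ≤ n) (rm rp : ℝ)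
    (h0 : 0 < rm) (hr : rm < rp)
    (x : GConf d n) (hx : x ∈ frontier (Ag d n rm rp)) :
    ∃ v : GConf d n, ‖v‖ ^ 2 < 4 * n ^ 3 * rp ^ 2 ∧
      (∀ i, gR x i = rp → ⟪v, nplus d n i⟫ = rm / 2) ∧
      (∀ i, gR x i = rm → ⟪v, nminus d n i⟫ = rm / 2) ∧
      (∀ i j, i ≠ j → ‖gC x i - gC x j‖ = gR x i + gR x j →
        ⟪v, nij x i j⟫ ≥ rm / 2) := by
  have hA : x ∈ Ag d n rm rp := (isClosed_Ag rm rp).frontier_subset hx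
  exact ⟨escapeVector x rm rp, norm_sq_escapeVector_lt hn h0 hr hA,
    fun _ => inner_escapeVector_nplus hr.ne, fun _ => inner_escapeVector_nminus rm rp,
    fun _ _ hij hcol => inner_escapeVector_nij_ge h0 hr hA hij hcol⟩

/-- For every `x ∈ ∂A_g` there is a vector `v` with `|v|² < 4 n³ r₊²` such
that `v·n_{i+} = r₋/2` for every `i` with `x̆_i = r₊`, `v·n_{i−} = r₋/2` for every `i` with
`x̆_i = r₋`, and `v·n_{ij}(x) ≥ r₋/2` for every colliding pair `i ≠ j`. -/
theorem stmt_14 (d n : ℕ) (hd : 2 ≤ d) (hn : 1 ≤ n) (rm rp : ℝ)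
    (h0 : 0 < rm) (hr : rm < rp)
    (x : GConf d n) (hx : x ∈ frontier (Ag d n rm rp)) :
    ∃ v : GConf d n, ‖v‖ ^ 2 < 4 * n ^ 3 * rp ^ 2 ∧
      (∀ i, gR x i = rp → ⟪v, nplus d n i⟫ = rm / 2) ∧
      (∀ i, gR x i = rm → ⟪v, nminus d n i⟫ = rm / 2) ∧
      (∀ i j, i ≠ j → ‖gC x i - gC x j‖ = gR x i + gR x j →
        ⟪v, nij x i j⟫ ≥ rm / 2) :=
  stmt_14_general d n hn rm rp h0 hr x hx
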